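/- arXiv:1510.02331 — 3 statements merged into one kernel-verified Lean document; each statement's English description precedes it below -/
import Mathlib

section
/- Let K ⊆ ℝⁿ be a convex body and let δ ∈ ℝ be such that every translative packing of K has upper density at most δ. Then every translative packing of the convex body ½(K − K) has upper density at most δ · vol(½(K − K)) / vol(K). -/
open MeasureTheory Filter Metric Pointwise

/-- A translative packing of `K`: a set of translation vectors such that the translates
of the interior of `K` are pairwise disjoint. -/
def IsTranslativePacking {n : ℕ} (K X : Set (EuclideanSpace ℝ (Fin n))) : Prop :=
  ∀ x ∈ X, ∀ y ∈ X, x ≠ y →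
    Disjoint ((fun z => x + z) '' interior K) ((fun z => y + z) '' interior K)

/-- The upper density of a translative packing `X` of the body `K`. -/
noncomputable def packingUpperDensity {n : ℕ} (K X : Set (EuclideanSpace ℝ (Fin n))) : ℝ :=
  Filter.limsup (fun r : ℝ => ⨆ c : EuclideanSpace ℝ (Fin n),
    (volume (closedBall c r ∩ ⋃ x ∈ X, (fun z => x + z) '' K) /
      volume (closedBall c r)).toReal) Filter.atTop

open Topology

/-!
A packing of `L = ½(K − K)` is already a packing of `K` with the same translation vectors:
if `x + int K` and `y + int K` met, then `y − x = z ∈ int K − int K`, and `z = ½z − ½(−z)` with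
both `½z` and `½(−z)` in the open set `½(int K − int K) ⊆ int L`, so `x + int L` and `y + int L`
would meet as well. Inside a ball `B(c, r)`, each translate of `L` meeting it comes with a
translate of `K` lying in `B(c, r + R)`, and these translates of `K` have disjoint interiors and
`vol (∂K) = 0`; so the covered volumes compare by the factor `vol L / vol K`, up to the ratio
`((r + R) / r)ⁿ → 1` of the ball volumes.
-/

theorem disjoint_image_add_left_iff {G : Type*} [AddCommGroup G] (A : Set G) (x y : G) :
    Disjoint ((fun z => x + z) '' A) ((fun z => y + z) '' A) ↔ y - x ∉ A - A := by
  simp only [Set.disjoint_left, Set.mem_image, Set.mem_sub, not_exists, not_and,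
    forall_exists_index, and_imp]
  constructor
  · rintro h a ha b hb hab
    rw [sub_eq_sub_iff_add_eq_add] at hab
    exact h a ha rfl b hb (by rw [← hab, add_comm])
  · rintro h _ a ha rfl b hb hab
    exact h a ha b hb (by rw [sub_eq_sub_iff_add_eq_add, add_comm a, ← hab])

theorem interior_sub_subset_interior_half_sub {E : Type*} [AddCommGroup E] [TopologicalSpace E]
    [IsTopologicalAddGroup E] [Module ℝ E] [ContinuousConstSMul ℝ E] (K : Set E) :
    interior K - interior K ⊆
      interior ((2⁻¹ : ℝ) • (K - K)) - interior ((2⁻¹ : ℝ) • (K - K)) := by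
  have hhalf : (2⁻¹ : ℝ) • (interior K - interior K) ⊆ interior ((2⁻¹ : ℝ) • (K - K)) :=
    interior_maximal (Set.smul_set_mono (Set.sub_subset_sub interior_subset interior_subset))
      (isOpen_interior.sub_right.smul₀ (by norm_num))
  rintro _ ⟨a, ha, b, hb, rfl⟩
  exact ⟨_, hhalf (Set.smul_mem_smul_set ⟨a, ha, b, hb, rfl⟩),
    _, hhalf (Set.smul_mem_smul_set ⟨b, hb, a, ha, rfl⟩), by module⟩

namespace IsTranslativePacking

variable {n : ℕ} {K L X : Set (EuclideanSpace ℝ (Fin n))}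

theorem of_interior_sub_subset (hX : IsTranslativePacking L X)
    (hKL : interior K - interior K ⊆ interior L - interior L) : IsTranslativePacking K X :=
  fun x hx y hy hxy => (disjoint_image_add_left_iff _ x y).2 fun h =>
    (disjoint_image_add_left_iff _ x y).1 (hX x hx y hy hxy) (hKL h)

theorem countable (hX : IsTranslativePacking K X) (hK : (interior K).Nonempty) : X.Countable :=
  Set.PairwiseDisjoint.countable_of_isOpen hX
    (fun x _ => isOpenMap_add_left x _ isOpen_interior) fun _ _ => hK.image _

end IsTranslativePacking

section Covering

variable {E : Type*} [NormedAddCommGroup E]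

theorem image_add_left_subset_closedBall {K A : Set E} {R r : ℝ} {x c : E}
    (hR : K - A ⊆ closedBall 0 R) (hx : ((fun z => x + z) '' A ∩ closedBall c r).Nonempty) :
    (fun z => x + z) '' K ⊆ closedBall c (r + R) := by
  obtain ⟨_, ⟨a, ha, rfl⟩, hac⟩ := hx
  rintro _ ⟨k, hk, rfl⟩
  have hka : ‖k - a‖ ≤ R := mem_closedBall_zero_iff.1 (hR ⟨k, hk, a, ha, rfl⟩)
  calc dist (x + k) c ≤ dist (x + k) (x + a) + dist (x + a) c := dist_triangle _ _ _
    _ ≤ R + r := by rw [dist_add_left, dist_eq_norm]; exact add_le_add hka hac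
    _ = r + R := add_comm _ _

variable [MeasurableSpace E] [BorelSpace E] (μ : Measure E) [μ.IsAddLeftInvariant]

theorem measure_image_add_left (x : E) (A : Set E) : μ ((fun z => x + z) '' A) = μ A := by
  rw [Set.image_add_left, measure_preimage_add]

theorem measure_closedBall_inter_iUnion_mul_le {K A X : Set E} {R : ℝ} (hX : X.Countable)
    (hdisj : X.PairwiseDisjoint fun x => (fun z => x + z) '' interior K)
    (hK : μ (interior K) = μ K) (hR : K - A ⊆ closedBall 0 R) (c : E) (r : ℝ) :
    μ (closedBall c r ∩ ⋃ x ∈ X, (fun z => x + z) '' A) * μ K ≤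
      μ A * μ (closedBall c (r + R) ∩ ⋃ x ∈ X, (fun z => x + z) '' K) := by
  set S := {x ∈ X | ((fun z => x + z) '' A ∩ closedBall c r).Nonempty}
  have hSX : S ⊆ X := fun x hx => hx.1
  have hcover : closedBall c r ∩ ⋃ x ∈ X, (fun z => x + z) '' A ⊆
      ⋃ x ∈ S, (fun z => x + z) '' A := by
    rintro p ⟨hpc, hp⟩
    obtain ⟨x, hx, hpx⟩ := Set.mem_iUnion₂.1 hp
    exact Set.mem_iUnion₂.2 ⟨x, ⟨hx, p, hpx, hpc⟩, hpx⟩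
  have hpack : ⋃ x ∈ S, (fun z => x + z) '' interior K ⊆
      closedBall c (r + R) ∩ ⋃ x ∈ X, (fun z => x + z) '' K := by
    refine Set.iUnion₂_subset fun x hx => Set.subset_inter ?_ ?_
    · exact (Set.image_mono interior_subset).trans (image_add_left_subset_closedBall hR hx.2)
    · exact (Set.image_mono interior_subset).trans
        (Set.subset_biUnion_of_mem (u := fun x => (fun z => x + z) '' K) (hSX hx))
  have hvol : μ (⋃ x ∈ S, (fun z => x + z) '' interior K) = ∑' _ : S, μ K := by
    rw [measure_biUnion (hX.mono hSX) (hdisj.subset hSX)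
      fun x _ => (isOpenMap_add_left x _ isOpen_interior).measurableSet]
    simp only [measure_image_add_left, hK]
  calc μ (closedBall c r ∩ ⋃ x ∈ X, (fun z => x + z) '' A) * μ K
      ≤ (∑' _ : S, μ A) * μ K := by
        gcongr
        refine (measure_mono hcover).trans ((measure_biUnion_le μ (hX.mono hSX) _).trans ?_)
        simp only [measure_image_add_left, le_refl]
    _ = μ A * μ (⋃ x ∈ S, (fun z => x + z) '' interior K) := by
        rw [hvol, ← ENNReal.tsum_mul_right, ← ENNReal.tsum_mul_left]
    _ ≤ μ A * μ (closedBall c (r + R) ∩ ⋃ x ∈ X, (fun z => x + z) '' K) := by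
        gcongr

end Covering

theorem limsup_le_limsup_mul_of_le_shift_mul {f g ρ : ℝ → ℝ} {R a : ℝ} (hf : 0 ≤ᶠ[atTop] f)
    (hg0 : ∀ r, 0 ≤ g r) (hg : BddAbove (Set.range g)) (hρ0 : 0 ≤ᶠ[atTop] ρ)
    (hρ : Tendsto ρ atTop (𝓝 a)) (hfg : ∀ᶠ r in atTop, f r ≤ g (r + R) * ρ r) :
    limsup f atTop ≤ limsup g atTop * a := by
  obtain ⟨b, hb⟩ := hg
  have hgR : IsBoundedUnder (· ≤ ·) atTop fun r => g (r + R) :=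
    isBoundedUnder_of ⟨b, fun r => hb ⟨_, rfl⟩⟩
  have hshift : limsup (fun r => g (r + R)) atTop = limsup g atTop := by
    change limsup (g ∘ fun r => r + R) atTop = _
    rw [limsup_comp, map_add_atTop_eq]
  calc limsup f atTop ≤ limsup ((fun r => g (r + R)) * ρ) atTop :=
        limsup_le_limsup hfg (IsCoboundedUnder.of_frequently_ge hf.frequently)
          (isBoundedUnder_le_mul_of_nonneg (.of_forall fun r => hg0 _) hgR hρ0
            hρ.isBoundedUnder_le)
    _ ≤ limsup (fun r => g (r + R)) atTop * limsup ρ atTop :=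
        limsup_mul_le (.of_forall fun r => hg0 _) hgR hρ0 hρ.isBoundedUnder_le
    _ = limsup g atTop * a := by rw [hshift, hρ.limsup_eq]

theorem tendsto_add_const_div_self_atTop (R : ℝ) :
    Tendsto (fun r : ℝ => (r + R) / r) atTop (𝓝 1) := by
  have h : Tendsto (fun r : ℝ => 1 + R / r) atTop (𝓝 (1 + 0)) :=
    tendsto_const_nhds.add (tendsto_const_nhds.div_atTop tendsto_id)
  rw [add_zero] at h
  refine h.congr' ?_
  filter_upwards [eventually_ne_atTop 0] with r hr
  rw [add_div, div_self hr]

section BallDensity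

variable {E : Type*} [PseudoMetricSpace E] [MeasureSpace E]

noncomputable def ballDensity (U : Set E) (r : ℝ) : ℝ :=
  ⨆ c : E, (volume (closedBall c r ∩ U) / volume (closedBall c r)).toReal

theorem packingUpperDensity_eq_limsup_ballDensity {n : ℕ} (K X : Set (EuclideanSpace ℝ (Fin n))) :
    packingUpperDensity K X = limsup (ballDensity (⋃ x ∈ X, (fun z => x + z) '' K)) atTop :=
  rfl

theorem toReal_measure_closedBall_inter_div_le_one (U : Set E) (c : E) (r : ℝ) :
    (volume (closedBall c r ∩ U) / volume (closedBall c r)).toReal ≤ 1 :=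
  ENNReal.toReal_le_of_le_ofReal zero_le_one <| by
    rw [ENNReal.ofReal_one]
    exact (ENNReal.div_le_div_right (measure_mono Set.inter_subset_left) _).trans
      ENNReal.div_self_le_one

theorem ballDensity_nonneg (U : Set E) (r : ℝ) : 0 ≤ ballDensity U r :=
  Real.iSup_nonneg fun _ => ENNReal.toReal_nonneg

theorem bddAbove_range_ballDensity (U : Set E) : BddAbove (Set.range (ballDensity U)) :=
  ⟨1, Set.forall_mem_range.2 fun r =>
    Real.iSup_le (fun c => toReal_measure_closedBall_inter_div_le_one U c r) zero_le_one⟩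

theorem le_ballDensity (U : Set E) (c : E) (r : ℝ) :
    (volume (closedBall c r ∩ U) / volume (closedBall c r)).toReal ≤ ballDensity U r :=
  le_ciSup ⟨1, Set.forall_mem_range.2 fun c => toReal_measure_closedBall_inter_div_le_one U c r⟩ c

end BallDensity

section FiniteDimensional

open Module ENNReal

variable {E : Type*} [NormedAddCommGroup E] [NormedSpace ℝ E] [FiniteDimensional ℝ E]
  [MeasureSpace E] [BorelSpace E] [(volume : Measure E).IsAddHaarMeasure]

theorem toReal_volume_closedBall (c : E) {r : ℝ} (hr : 0 ≤ r) :
    (volume (closedBall c r)).toReal = r ^ finrank ℝ E * (volume (ball (0 : E) 1)).toReal := by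
  rw [Measure.addHaar_closedBall volume c hr, toReal_mul, toReal_ofReal (by positivity)]

theorem ballDensity_le_of_mul_le {U V : Set E} {m M : ℝ≥0∞} (hm0 : m ≠ 0) (hm : m ≠ ∞)
    (hM : M ≠ ∞) {R r : ℝ} (hR : 0 ≤ R) (hr : 0 < r)
    (h : ∀ c, volume (closedBall c r ∩ U) * m ≤ M * volume (closedBall c (r + R) ∩ V)) :
    ballDensity U r ≤
      ballDensity V (r + R) * (M.toReal / m.toReal * ((r + R) / r) ^ finrank ℝ E) := by
  have hmpos : 0 < m.toReal := toReal_pos hm0 hm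
  refine ciSup_le fun c => ?_
  have hab : (volume (closedBall c r ∩ U)).toReal ≤
      M.toReal / m.toReal * (volume (closedBall c (r + R) ∩ V)).toReal := by
    rw [div_mul_eq_mul_div, le_div_iff₀ hmpos, ← toReal_mul, ← toReal_mul]
    exact toReal_mono (mul_ne_top hM (measure_closedBall_lt_top.trans_le'
      (measure_mono Set.inter_subset_left)).ne) (h c)
  calc (volume (closedBall c r ∩ U) / volume (closedBall c r)).toReal
      ≤ M.toReal / m.toReal * (volume (closedBall c (r + R) ∩ V)).toReal
        / (volume (closedBall c r)).toReal := by
        rw [toReal_div]; gcongr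
    _ = (volume (closedBall c (r + R) ∩ V) / volume (closedBall c (r + R))).toReal *
        (M.toReal / m.toReal * ((r + R) / r) ^ finrank ℝ E) := by
        rw [toReal_div, toReal_volume_closedBall c hr.le,
          toReal_volume_closedBall c (by positivity), div_pow]
        field_simp
    _ ≤ _ := by gcongr; exact le_ballDensity V c (r + R)

theorem limsup_ballDensity_le_of_mul_le {U V : Set E} {m M : ℝ≥0∞} (hm0 : m ≠ 0) (hm : m ≠ ∞)
    (hM : M ≠ ∞) {R : ℝ} (hR : 0 ≤ R)
    (h : ∀ c r, volume (closedBall c r ∩ U) * m ≤ M * volume (closedBall c (r + R) ∩ V)) :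
    limsup (ballDensity U) atTop ≤ limsup (ballDensity V) atTop * (M.toReal / m.toReal) := by
  have hρ := ((tendsto_add_const_div_self_atTop R).pow (finrank ℝ E)).const_mul
    (M.toReal / m.toReal)
  rw [one_pow, mul_one] at hρ
  refine limsup_le_limsup_mul_of_le_shift_mul (R := R) (.of_forall (ballDensity_nonneg U))
    (ballDensity_nonneg V) (bddAbove_range_ballDensity V) ?_ hρ ?_
  · filter_upwards [eventually_gt_atTop 0] with r hr
    positivity
  · filter_upwards [eventually_gt_atTop 0] with r hr
    exact ballDensity_le_of_mul_le hm0 hm hM hR hr fun c => h c r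

end FiniteDimensional

/-- A density upper bound `δ` for translative packings of `K` yields the upper bound
`δ · vol(½(K − K)) / vol(K)` for translative packings of `½(K − K)`. -/
theorem difference_body_density_bound {n : ℕ} (K : Set (EuclideanSpace ℝ (Fin n)))
    (hKc : IsCompact K) (hKconv : Convex ℝ K) (hKint : (interior K).Nonempty)
    (δ : ℝ)
    (hδ : ∀ X : Set (EuclideanSpace ℝ (Fin n)),
      IsTranslativePacking K X → packingUpperDensity K X ≤ δ)
    (L : Set (EuclideanSpace ℝ (Fin n))) (hL : L = (2⁻¹ : ℝ) • (K - K)) :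
    ∀ X : Set (EuclideanSpace ℝ (Fin n)), IsTranslativePacking L X →
      packingUpperDensity L X ≤ δ * (volume L).toReal / (volume K).toReal := by
  intro X hXL
  have hXK : IsTranslativePacking K X :=
    hXL.of_interior_sub_subset (hL ▸ interior_sub_subset_interior_half_sub K)
  have hLb : Bornology.IsBounded L :=
    hL ▸ (isBounded_sub hKc.isBounded hKc.isBounded).smul₀ _
  obtain ⟨R, hR0, hR⟩ := (isBounded_sub hKc.isBounded hLb).subset_closedBall_lt 0 0
  have hK0 : volume K ≠ 0 :=
    (Measure.measure_pos_of_nonempty_interior volume hKint).ne'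
  calc packingUpperDensity L X
      ≤ packingUpperDensity K X * ((volume L).toReal / (volume K).toReal) := by
        simp only [packingUpperDensity_eq_limsup_ballDensity]
        exact limsup_ballDensity_le_of_mul_le hK0 hKc.measure_lt_top.ne hLb.measure_lt_top.ne
          hR0.le
          (measure_closedBall_inter_iUnion_mul_le volume (hXK.countable hKint) hXK
            (measure_interior_of_null_frontier (hKconv.addHaar_frontier volume)) hR)
    _ ≤ δ * ((volume L).toReal / (volume K).toReal) := by gcongr; exact hδ X hXK
    _ = δ * (volume L).toReal / (volume K).toReal := (mul_div_assoc ..).symm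
end

section
/- Let G ⊆ GL₃(ℝ) be the octahedral group 𝖡₃ of all 3×3 signed permutation matrices, acting on ℝ[x₁,x₂,x₃] by (g·p)(x) = p(g⁻¹x). For each integer k ≥ 0, the dimension of the real vector space of G-invariant homogeneous polynomials of degree k equals the number of triples (a,b,c) ∈ ℕ³ with 2a + 4b + 6c = k. -/
open MvPolynomial

/-- The octahedral group `𝖡₃`: the set of all 3×3 signed permutation matrices. -/
def signedPermMatrices : Set (Matrix (Fin 3) (Fin 3) ℝ) :=
  {A | ∃ (σ : Equiv.Perm (Fin 3)) (ε : Fin 3 → ℝ),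
    (∀ i, ε i = 1 ∨ ε i = -1) ∧ A = Matrix.of fun i j => if j = σ i then ε i else 0}

/-- The submodule of `𝖡₃`-invariant polynomials in three variables. -/
noncomputable def invariantSubmodule : Submodule ℝ (MvPolynomial (Fin 3) ℝ) where
  carrier := {p | ∀ A ∈ signedPermMatrices, ∀ x : Fin 3 → ℝ,
    eval (A⁻¹.mulVec x) p = eval x p}
  add_mem' := by
    intro a b ha hb A hA x
    simp only [map_add]
    rw [ha A hA x, hb A hA x]
  zero_mem' := by
    intro A hA x
    simp
  smul_mem' := by
    intro c a ha A hA x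
    simp only [MvPolynomial.smul_eq_C_mul, map_mul, eval_C, ha A hA x]

/-!
A polynomial is fixed by every signed permutation of the variables iff its coefficients are
invariant under permuting the exponent vector and vanish on exponents with an odd entry. The
invariants of degree `k` therefore have as a basis the orbit sums of the monomials with even
exponents, one orbit for each sorted even exponent `(2c, 2(b + c), 2(a + b + c))` of degree
`2a + 4b + 6c = k`.
-/

theorem signedPermMatrix_inv_mulVec {ι K : Type*} [Fintype ι] [DecidableEq ι] [CommRing K]
    (σ : Equiv.Perm ι) {ε : ι → K} (hε : ∀ i, ε i = 1 ∨ ε i = -1) (x : ι → K) :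
    (Matrix.of fun i j => if j = σ i then ε i else 0)⁻¹.mulVec x =
      fun i => ε (σ.symm i) * x (σ.symm i) := by
  set A : Matrix ι ι K := Matrix.of fun i j => if j = σ i then ε i else 0
  have hsq : ∀ i, ε i * ε i = 1 := fun i => by rcases hε i with h | h <;> simp [h]
  have hA : A⁻¹ = A.transpose := by
    refine Matrix.inv_eq_left_inv ?_
    ext i k
    simp [A, Matrix.mul_apply, ← Equiv.symm_apply_eq, Matrix.one_apply, hsq]
  ext i
  rw [hA]
  simp [A, Matrix.mulVec, dotProduct, ← Equiv.symm_apply_eq]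

section SignedRename

variable {σ R : Type*} [CommRing R]

noncomputable def signedRename (τ : Equiv.Perm σ) (ε : σ → R) :
    MvPolynomial σ R →ₐ[R] MvPolynomial σ R :=
  aeval fun i => C (ε i) * X (τ i)

theorem eval_signedRename (τ : Equiv.Perm σ) (ε x : σ → R) (p : MvPolynomial σ R) :
    eval x (signedRename τ ε p) = eval (fun i => ε i * x (τ i)) p := by
  rw [signedRename, aeval_eq_bind₁, eval, eval₂Hom_bind₁]
  simp

theorem signedRename_one (τ : Equiv.Perm σ) : signedRename τ (1 : σ → R) = rename τ := by
  ext i : 1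
  simp [signedRename]

theorem signedRename_monomial (τ : Equiv.Perm σ) (ε : σ → R) (d : σ →₀ ℕ) (r : R) :
    signedRename τ ε (monomial d r) =
      monomial (Finsupp.mapDomain τ d) (r * d.prod fun i k => ε i ^ k) := by
  rw [signedRename, aeval_monomial, monomial_eq, Finsupp.prod_mapDomain_index_inj τ.injective]
  simp only [Finsupp.prod, mul_pow, ← C_pow, Finset.prod_mul_distrib, ← map_prod, map_mul,
    algebraMap_eq]
  ring

theorem coeff_mapDomain_signedRename (τ : Equiv.Perm σ) (ε : σ → R) (d : σ →₀ ℕ)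
    (p : MvPolynomial σ R) :
    coeff (Finsupp.mapDomain τ d) (signedRename τ ε p) =
      (d.prod fun i k => ε i ^ k) * coeff d p := by
  classical
  induction p using MvPolynomial.induction_on' with
  | monomial e r =>
    rw [signedRename_monomial, coeff_monomial, coeff_monomial]
    by_cases h : e = d
    · simp [h, mul_comm]
    · simp [h, (Finsupp.mapDomain_injective τ.injective).eq_iff]
  | add p q hp hq => simp only [map_add, coeff_add, hp, hq, mul_add]

theorem signedRename_eq_self_of_coeff {p : MvPolynomial σ R}
    (hperm : ∀ (τ : Equiv.Perm σ) d, coeff (Finsupp.mapDomain τ d) p = coeff d p)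
    (hodd : ∀ d i, Odd (d i) → coeff d p = 0)
    (τ : Equiv.Perm σ) {ε : σ → R} (hε : ∀ i, ε i = 1 ∨ ε i = -1) :
    signedRename τ ε p = p := by
  ext e
  obtain ⟨d, rfl⟩ : ∃ d, Finsupp.mapDomain τ d = e :=
    ⟨Finsupp.mapDomain τ.symm e, by simp [← Finsupp.mapDomain_comp, Finsupp.mapDomain_id]⟩
  rw [coeff_mapDomain_signedRename, hperm]
  by_cases heven : ∀ i, Even (d i)
  · suffices (d.prod fun i k => ε i ^ k) = 1 by rw [this, one_mul]
    refine Finset.prod_eq_one fun i _ => ?_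
    rcases hε i with h | h <;> simp [h, (heven i).neg_one_pow]
  · obtain ⟨i, hi⟩ := not_forall.mp heven
    rw [hodd d i (Nat.not_even_iff_odd.mp hi), mul_zero]

theorem coeff_eq_zero_of_signedRename_eq_self [IsDomain R] [CharZero R] [DecidableEq σ]
    {p : MvPolynomial σ R} {i : σ}
    (h : signedRename (Equiv.refl σ) (Function.update 1 i (-1)) p = p)
    {d : σ →₀ ℕ} (hd : Odd (d i)) : coeff d p = 0 := by
  have hsign : (d.prod fun j k => Function.update (1 : σ → R) i (-1) j ^ k) = -1 := by
    rw [Finsupp.prod_eq_single i (fun j _ hj => by simp [hj]) (by simp)]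
    simp [hd.neg_one_pow]
  have := coeff_mapDomain_signedRename (Equiv.refl σ) (Function.update 1 i (-1)) d p
  rwa [h, hsign, Equiv.coe_refl, Finsupp.mapDomain_id, neg_one_mul, eq_neg_iff_add_eq_zero,
    add_self_eq_zero] at this

theorem forall_signedRename_eq_self_iff [IsDomain R] [CharZero R] {p : MvPolynomial σ R} :
    (∀ (τ : Equiv.Perm σ) (ε : σ → R), (∀ i, ε i = 1 ∨ ε i = -1) → signedRename τ ε p = p) ↔
      (∀ (τ : Equiv.Perm σ) d, coeff (Finsupp.mapDomain τ d) p = coeff d p) ∧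
        ∀ d i, Odd (d i) → coeff d p = 0 := by
  classical
  refine ⟨fun h => ⟨fun τ d => ?_, fun d i hd => ?_⟩,
    fun ⟨hperm, hodd⟩ τ ε hε => signedRename_eq_self_of_coeff hperm hodd τ hε⟩
  · have := congrArg (coeff (Finsupp.mapDomain τ d)) (h τ 1 fun _ => Or.inl rfl)
    rwa [signedRename_one, coeff_rename_mapDomain _ τ.injective, eq_comm] at this
  · refine coeff_eq_zero_of_signedRename_eq_self (h _ _ fun j => ?_) hd
    by_cases hj : j = i <;> simp [hj]

end SignedRename

section ExponentOrbit

variable {σ : Type*} [Fintype σ] [DecidableEq σ]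

noncomputable def exponentOrbit (d : σ →₀ ℕ) : Finset (σ →₀ ℕ) :=
  Finset.univ.image fun ρ : Equiv.Perm σ => Finsupp.mapDomain ρ d

theorem mem_exponentOrbit {d e : σ →₀ ℕ} :
    e ∈ exponentOrbit d ↔ ∃ ρ : Equiv.Perm σ, Finsupp.mapDomain ρ d = e := by
  simp [exponentOrbit]

theorem self_mem_exponentOrbit (d : σ →₀ ℕ) : d ∈ exponentOrbit d :=
  mem_exponentOrbit.mpr ⟨1, by simp [Finsupp.mapDomain_id]⟩

theorem mapDomain_mem_exponentOrbit_iff (τ : Equiv.Perm σ) {d e : σ →₀ ℕ} :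
    Finsupp.mapDomain τ e ∈ exponentOrbit d ↔ e ∈ exponentOrbit d := by
  simp only [mem_exponentOrbit]
  constructor
  · rintro ⟨ρ, hρ⟩
    refine ⟨ρ.trans τ.symm, ?_⟩
    rw [Equiv.coe_trans, Finsupp.mapDomain_comp, hρ, ← Finsupp.mapDomain_comp]
    simp [Finsupp.mapDomain_id]
  · rintro ⟨ρ, rfl⟩
    exact ⟨ρ.trans τ, by rw [Equiv.coe_trans, Finsupp.mapDomain_comp]⟩

theorem degree_of_mem_exponentOrbit {d e : σ →₀ ℕ} (he : e ∈ exponentOrbit d) :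
    e.degree = d.degree := by
  obtain ⟨ρ, rfl⟩ := mem_exponentOrbit.mp he
  exact Finsupp.degree_mapDomain ρ d

theorem even_of_mem_exponentOrbit {d e : σ →₀ ℕ} (hd : ∀ i, Even (d i))
    (he : e ∈ exponentOrbit d) (i : σ) : Even (e i) := by
  obtain ⟨ρ, rfl⟩ := mem_exponentOrbit.mp he
  rw [Finsupp.mapDomain_equiv_apply]
  exact hd _

theorem eq_of_mem_exponentOrbit_of_monotone {n : ℕ} {d d' e : Fin n →₀ ℕ}
    (hd : Monotone d) (hd' : Monotone d') (he : e ∈ exponentOrbit d)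
    (he' : e ∈ exponentOrbit d') : d = d' := by
  obtain ⟨ρ, rfl⟩ := mem_exponentOrbit.mp he
  obtain ⟨ρ', hρ'⟩ := mem_exponentOrbit.mp he'
  have hcomp : ⇑d' = ⇑d ∘ (ρ'.trans ρ.symm) := by
    ext i
    simpa [Finsupp.mapDomain_equiv_apply] using congrArg (· (ρ' i)) hρ'
  ext i
  have := Tuple.unique_monotone (f := ⇑d) (σ := 1) (τ := ρ'.trans ρ.symm) hd (hcomp ▸ hd')
  rw [← hcomp] at this
  exact congrFun this i

variable {R : Type*} [CommSemiring R]

noncomputable def orbitSum (d : σ →₀ ℕ) : MvPolynomial σ R :=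
  ∑ e ∈ exponentOrbit d, monomial e 1

theorem coeff_orbitSum (d e : σ →₀ ℕ) :
    coeff e (orbitSum d : MvPolynomial σ R) = if e ∈ exponentOrbit d then 1 else 0 := by
  simp only [orbitSum, coeff_sum, coeff_monomial]
  exact Finset.sum_ite_eq' _ e _

theorem isHomogeneous_orbitSum (d : σ →₀ ℕ) :
    (orbitSum d : MvPolynomial σ R).IsHomogeneous d.degree :=
  IsHomogeneous.sum _ _ _ fun _ he => isHomogeneous_monomial _ (degree_of_mem_exponentOrbit he)

theorem coeff_eq_of_mem_exponentOrbit {p : MvPolynomial σ R}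
    (hperm : ∀ (τ : Equiv.Perm σ) d, coeff (Finsupp.mapDomain τ d) p = coeff d p)
    {d e : σ →₀ ℕ} (he : e ∈ exponentOrbit d) : coeff e p = coeff d p := by
  obtain ⟨ρ, rfl⟩ := mem_exponentOrbit.mp he
  exact hperm ρ d

end ExponentOrbit

theorem mem_invariantSubmodule_iff_signedRename {p : MvPolynomial (Fin 3) ℝ} :
    p ∈ invariantSubmodule ↔ ∀ (τ : Equiv.Perm (Fin 3)) (ε : Fin 3 → ℝ),
      (∀ i, ε i = 1 ∨ ε i = -1) → signedRename τ ε p = p := by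
  constructor
  · intro hp τ ε hε
    refine MvPolynomial.funext fun x => ?_
    have := hp _ ⟨τ.symm, ε ∘ τ.symm, fun i => hε _, rfl⟩ x
    rw [signedPermMatrix_inv_mulVec τ.symm (ε := ε ∘ τ.symm) fun i => hε _] at this
    simpa [eval_signedRename] using this
  · rintro h A ⟨σ, ε, hε, rfl⟩ x
    rw [signedPermMatrix_inv_mulVec σ hε]
    conv_rhs => rw [← h σ.symm (ε ∘ σ.symm) fun i => hε _, eval_signedRename]
    rfl

theorem mem_invariantSubmodule_iff {p : MvPolynomial (Fin 3) ℝ} :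
    p ∈ invariantSubmodule ↔
      (∀ (τ : Equiv.Perm (Fin 3)) d, coeff (Finsupp.mapDomain τ d) p = coeff d p) ∧
        ∀ d i, Odd (d i) → coeff d p = 0 := by
  rw [mem_invariantSubmodule_iff_signedRename, forall_signedRename_eq_self_iff]

theorem orbitSum_mem_invariantSubmodule {d : Fin 3 →₀ ℕ} (hd : ∀ i, Even (d i)) :
    orbitSum d ∈ invariantSubmodule := by
  refine mem_invariantSubmodule_iff.mpr ⟨fun τ e => ?_, fun e i he => ?_⟩
  · simp only [coeff_orbitSum, mapDomain_mem_exponentOrbit_iff]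
  · rw [coeff_orbitSum, if_neg fun hmem =>
      Nat.not_even_iff_odd.mpr he (even_of_mem_exponentOrbit hd hmem i)]

noncomputable def sortedExponent (t : ℕ × ℕ × ℕ) : Fin 3 →₀ ℕ :=
  Finsupp.equivFunOnFinite.symm ![2 * t.2.2, 2 * (t.2.1 + t.2.2), 2 * (t.1 + t.2.1 + t.2.2)]

theorem monotone_sortedExponent (t : ℕ × ℕ × ℕ) : Monotone (sortedExponent t) := by
  simp [Fin.monotone_iff_le_succ, Fin.forall_fin_two, sortedExponent]

theorem even_sortedExponent (t : ℕ × ℕ × ℕ) (i : Fin 3) : Even (sortedExponent t i) := by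
  fin_cases i <;> simp [sortedExponent]

theorem degree_sortedExponent (t : ℕ × ℕ × ℕ) :
    (sortedExponent t).degree = 2 * t.1 + 4 * t.2.1 + 6 * t.2.2 := by
  simp [Finsupp.degree_eq_sum, Fin.sum_univ_three, sortedExponent]
  ring

theorem sortedExponent_injective : Function.Injective sortedExponent := by
  rintro ⟨a, b, c⟩ ⟨a', b', c'⟩ h
  have h0 := DFunLike.congr_fun h 0
  have h1 := DFunLike.congr_fun h 1
  have h2 := DFunLike.congr_fun h 2
  simp [sortedExponent] at h0 h1 h2
  simp only [Prod.mk.injEq]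
  omega

theorem exists_sortedExponent_eq {f : Fin 3 → ℕ} (hf : Monotone f) (heven : ∀ i, Even (f i)) :
    ∃ t, ⇑(sortedExponent t) = f := by
  obtain ⟨x, hx⟩ := heven 0
  obtain ⟨y, hy⟩ := heven 1
  obtain ⟨z, hz⟩ := heven 2
  have h01 : f 0 ≤ f 1 := hf (by decide)
  have h12 : f 1 ≤ f 2 := hf (by decide)
  refine ⟨(z - y, y - x, x), funext fun i => ?_⟩
  fin_cases i <;> simp [sortedExponent] <;> omega

theorem exists_mem_exponentOrbit_sortedExponent {e : Fin 3 →₀ ℕ} (heven : ∀ i, Even (e i)) :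
    ∃ t, e ∈ exponentOrbit (sortedExponent t) := by
  obtain ⟨t, ht⟩ := exists_sortedExponent_eq (Tuple.monotone_sort e) fun i => heven _
  refine ⟨t, mem_exponentOrbit.mpr ⟨Tuple.sort e, Finsupp.ext fun i => ?_⟩⟩
  simp [Finsupp.mapDomain_equiv_apply, ht]

theorem eq_of_mem_exponentOrbit_sortedExponent {e : Fin 3 →₀ ℕ} {t t' : ℕ × ℕ × ℕ}
    (ht : e ∈ exponentOrbit (sortedExponent t)) (ht' : e ∈ exponentOrbit (sortedExponent t')) :
    t = t' :=
  sortedExponent_injective <| eq_of_mem_exponentOrbit_of_monotone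
    (monotone_sortedExponent t) (monotone_sortedExponent t') ht ht'

theorem linearIndependent_orbitSum_sortedExponent {R : Type*} [CommRing R] :
    LinearIndependent R fun t => (orbitSum (sortedExponent t) : MvPolynomial (Fin 3) R) :=
  .of_pairwise_dual_eq_zero_one _ (fun t => lcoeff R (sortedExponent t))
    (fun t t' hne => by
      simp only [lcoeff_apply, coeff_orbitSum]
      exact if_neg fun h =>
        hne (eq_of_mem_exponentOrbit_sortedExponent (self_mem_exponentOrbit _) h))
    (fun t => by simp [coeff_orbitSum, self_mem_exponentOrbit])

abbrev triplesOfWeight (k : ℕ) : Type :=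
  {t : ℕ × ℕ × ℕ // 2 * t.1 + 4 * t.2.1 + 6 * t.2.2 = k}

noncomputable instance (k : ℕ) : Fintype (triplesOfWeight k) :=
  Set.Finite.fintype <| (Set.finite_Iic (k, k, k)).subset
    fun t (ht : 2 * t.1 + 4 * t.2.1 + 6 * t.2.2 = k) => by
      simp only [Set.mem_Iic, Prod.le_def]
      omega

theorem eq_sum_coeff_smul_orbitSum {k : ℕ} {p : MvPolynomial (Fin 3) ℝ}
    (hp : p ∈ invariantSubmodule ⊓ homogeneousSubmodule (Fin 3) ℝ k) :
    p = ∑ t : triplesOfWeight k, coeff (sortedExponent t.1) p • orbitSum (sortedExponent t.1) := by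
  obtain ⟨hinv, hhom⟩ := hp
  obtain ⟨hperm, hodd⟩ := mem_invariantSubmodule_iff.mp hinv
  ext e
  simp only [coeff_sum, coeff_smul, coeff_orbitSum, smul_eq_mul, mul_ite, mul_one, mul_zero]
  rw [Finset.sum_congr rfl fun t _ => ite_congr rfl
    (fun he => (coeff_eq_of_mem_exponentOrbit hperm he).symm) fun _ => rfl]
  by_cases he : coeff e p = 0
  · simp [he]
  obtain ⟨t, ht⟩ := exists_mem_exponentOrbit_sortedExponent
    fun i => Nat.not_odd_iff_even.mp fun h => he (hodd e i h)
  have hk : 2 * t.1 + 4 * t.2.1 + 6 * t.2.2 = k := by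
    rw [← degree_sortedExponent, ← degree_of_mem_exponentOrbit ht, Finsupp.degree_eq_weight_one]
    exact hhom he
  have hmem (t' : triplesOfWeight k) : e ∈ exponentOrbit (sortedExponent t'.1) ↔ t' = ⟨t, hk⟩ :=
    ⟨fun h => Subtype.ext (eq_of_mem_exponentOrbit_sortedExponent h ht), fun h => h ▸ ht⟩
  simp only [hmem, Finset.sum_ite_eq', Finset.mem_univ, if_true]

theorem span_orbitSum_sortedExponent (k : ℕ) :
    Submodule.span ℝ (Set.range fun t : triplesOfWeight k => orbitSum (sortedExponent t.1)) =
      invariantSubmodule ⊓ homogeneousSubmodule (Fin 3) ℝ k := by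
  refine le_antisymm (Submodule.span_le.mpr ?_) fun p hp => ?_
  · rintro _ ⟨t, rfl⟩
    refine ⟨orbitSum_mem_invariantSubmodule (even_sortedExponent t.1), ?_⟩
    have := isHomogeneous_orbitSum (R := ℝ) (sortedExponent t.1)
    rwa [degree_sortedExponent, t.2] at this
  · rw [eq_sum_coeff_smul_orbitSum hp]
    exact Submodule.sum_mem _ fun t _ => Submodule.smul_mem _ _ (Submodule.subset_span ⟨t, rfl⟩)

/-- Molien series computation: the dimension of the space of `𝖡₃`-invariant homogeneous
polynomials of degree `k` equals the number of triples `(a,b,c) ∈ ℕ³` with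
`2a + 4b + 6c = k`. -/
theorem b3_invariant_dimension (k : ℕ) :
    Module.finrank ℝ
        ↥(invariantSubmodule ⊓ MvPolynomial.homogeneousSubmodule (Fin 3) ℝ k) =
      Nat.card {t : ℕ × ℕ × ℕ // 2 * t.1 + 4 * t.2.1 + 6 * t.2.2 = k} := by
  rw [← span_orbitSum_sortedExponent k]
  exact Module.finrank_eq_nat_card_basis <| .span <|
    linearIndependent_orbitSum_sortedExponent.comp Subtype.val Subtype.val_injective
end

section
/- The Robinson polynomial R(x₁,x₂,x₃) = x₁⁶ + x₂⁶ + x₃⁶ − (x₁⁴x₂² + x₁²x₂⁴ + x₁⁴x₃² + x₁²x₃⁴ + x₂⁴x₃² + x₂²x₃⁴) + 3x₁²x₂²x₃² satisfies R(x) ≥ 0 for all x ∈ ℝ³, but there do not exist finitely many polynomials q₁, …, q_m ∈ ℝ[x₁,x₂,x₃] with R = q₁² + ⋯ + q_m². -/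
/-!
With `a, b, c = x₁², x₂², x₃²`, the Robinson polynomial is the Schur form
`a(a-b)(a-c) + b(b-a)(b-c) + c(c-a)(c-b)`, hence nonnegative.

If `R = ∑ qᵢ²`, then, since `R` is homogeneous of degree 6 and the top-degree parts of the
squares cannot cancel, `R = ∑ hᵢ²` where `hᵢ` is the cubic part of `qᵢ`. Every `hᵢ` vanishes at the
ten projective zeros `(1,±1,0), (1,0,±1), (0,1,±1), (1,±1,±1)` of `R`. These impose independent
linear conditions on the ten-dimensional space of ternary cubics, so all `hᵢ = 0`, i.e. `R = 0`.
-/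

open MvPolynomial

/-- The Robinson polynomial
`x₁⁶ + x₂⁶ + x₃⁶ − (x₁⁴x₂² + x₁²x₂⁴ + x₁⁴x₃² + x₁²x₃⁴ + x₂⁴x₃² + x₂²x₃⁴) + 3x₁²x₂²x₃²`. -/
noncomputable def robinson : MvPolynomial (Fin 3) ℝ :=
  X 0 ^ 6 + X 1 ^ 6 + X 2 ^ 6 -
    (X 0 ^ 4 * X 1 ^ 2 + X 0 ^ 2 * X 1 ^ 4 + X 0 ^ 4 * X 2 ^ 2 + X 0 ^ 2 * X 2 ^ 4 +
      X 1 ^ 4 * X 2 ^ 2 + X 1 ^ 2 * X 2 ^ 4) +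
    3 * (X 0 ^ 2 * X 1 ^ 2 * X 2 ^ 2)

theorem IsFormallyReal.eq_zero_of_sum_sq_eq_zero {A ι : Type*} [CommRing A] [IsFormallyReal A]
    {s : Finset ι} {f : ι → A} (h : ∑ i ∈ s, f i ^ 2 = 0) : ∀ i ∈ s, f i = 0 := by
  classical
  intro j hj
  rw [← Finset.add_sum_erase s _ hj, sq] at h
  exact IsNilpotent.eq_zero ⟨2, by
    rw [sq]; exact IsFormallyReal.eq_zero_of_add_right (.mul_self (f j)) (.sum_sq _ _) h⟩

theorem schur_inequality {R : Type*} [CommRing R] [LinearOrder R] [IsStrictOrderedRing R]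
    {a b c : R} (ha : 0 ≤ a) (hb : 0 ≤ b) (hc : 0 ≤ c) :
    0 ≤ a * (a - b) * (a - c) + b * (b - a) * (b - c) + c * (c - a) * (c - b) := by
  wlog hab : b ≤ a generalizing a b c
  · nlinarith [this hb ha hc (le_of_not_ge hab)]
  wlog hbc : c ≤ b generalizing a b c
  · rcases le_total c a with hca | hac
    · nlinarith [this ha hc hb hca (le_of_not_ge hbc)]
    · nlinarith [this hc ha hb hac hab]
  -- for `c ≤ b ≤ a` the first two terms add up to `(a - b)² (a + b - c)`
  nlinarith [mul_nonneg (sq_nonneg (a - b)) (by linarith : (0 : R) ≤ a + b - c),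
    mul_nonneg hc (mul_nonneg (by linarith : (0 : R) ≤ a - c) (by linarith : (0 : R) ≤ b - c))]

namespace Polynomial

variable {A ι : Type*} {s : Finset ι} {d : ℕ}

theorem coeff_sum_sq_of_natDegree_le [CommSemiring A] {P : ι → A[X]}
    (h : ∀ i ∈ s, (P i).natDegree ≤ d) :
    (∑ i ∈ s, P i ^ 2).coeff (d + d) = ∑ i ∈ s, (P i).coeff d ^ 2 := by
  rw [finsetSum_coeff]
  refine Finset.sum_congr rfl fun i hi => ?_
  rw [sq, sq, coeff_mul_add_eq_of_natDegree_le (h i hi) (h i hi)]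

theorem natDegree_le_of_natDegree_sum_sq_le [CommRing A] [IsFormallyReal A] {P : ι → A[X]}
    (h : (∑ i ∈ s, P i ^ 2).natDegree ≤ d + d) : ∀ i ∈ s, (P i).natDegree ≤ d := by
  by_contra! ⟨i₀, hi₀, hd⟩
  set D := s.sup fun i => (P i).natDegree
  have hle : ∀ i ∈ s, (P i).natDegree ≤ D := fun i hi =>
    Finset.le_sup (f := fun i => (P i).natDegree) hi
  obtain ⟨i₁, hi₁, hD⟩ := s.exists_mem_eq_sup ⟨i₀, hi₀⟩ fun i => (P i).natDegree
  have hdD : d < D := hd.trans_le (hle i₀ hi₀)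
  have htop : ∑ i ∈ s, (P i).coeff D ^ 2 = 0 := by
    rw [← coeff_sum_sq_of_natDegree_le hle]
    exact coeff_eq_zero_of_natDegree_lt (by omega)
  have hlead : (P i₁).leadingCoeff = 0 := by
    rw [leadingCoeff, ← hD]
    exact IsFormallyReal.eq_zero_of_sum_sq_eq_zero htop i₁ hi₁
  rw [leadingCoeff_eq_zero.mp hlead, natDegree_zero] at hD
  omega

end Polynomial

theorem IsSumSq.eval_nonneg {σ R : Type*} [CommRing R] [LinearOrder R] [IsStrictOrderedRing R]
    {s : MvPolynomial σ R} (hs : IsSumSq s) (x : σ → R) : 0 ≤ eval x s := by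
  induction hs with
  | zero => simp
  | sq_add a _ ih => rw [map_add, map_mul]; exact add_nonneg (mul_self_nonneg _) ih

namespace MvPolynomial

variable {σ R : Type*}

instance instIsFormallyReal [CommRing R] [LinearOrder R] [IsStrictOrderedRing R] :
    IsFormallyReal (MvPolynomial σ R) :=
  IsFormallyReal.of_eq_zero_of_eq_zero_of_mul_self_add fun {s a} hs h => by
    refine MvPolynomial.funext fun x => ?_
    have hx := congrArg (eval x) h
    rw [map_add, map_mul, map_zero] at hx
    simpa using ((add_eq_zero_iff_of_nonneg (mul_self_nonneg _) (hs.eval_nonneg x)).mp hx).1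

section homogeneousExpansion

variable [CommSemiring R]

noncomputable def homogeneousExpansion : MvPolynomial σ R →ₐ[R] Polynomial (MvPolynomial σ R) :=
  aeval fun i => Polynomial.C (X i) * Polynomial.X

theorem homogeneousExpansion_monomial (α : σ →₀ ℕ) (c : R) :
    homogeneousExpansion (monomial α c) =
      Polynomial.C (monomial α c) * Polynomial.X ^ α.degree := by
  rw [homogeneousExpansion, aeval_monomial, monomial_eq, Polynomial.algebraMap_apply,
    algebraMap_eq, Finsupp.prod, Finsupp.prod, Finsupp.degree_apply]
  simp only [mul_pow, ← Polynomial.C_pow, Finset.prod_mul_distrib, ← map_prod,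
    Finset.prod_pow_eq_pow_sum, map_mul, mul_assoc]

theorem coeff_homogeneousExpansion (p : MvPolynomial σ R) (n : ℕ) :
    (homogeneousExpansion p).coeff n = homogeneousComponent n p := by
  classical
  induction p using induction_on' with
  | monomial α c =>
    ext β
    rw [homogeneousExpansion_monomial, Polynomial.coeff_C_mul_X_pow, coeff_homogeneousComponent,
      apply_ite (coeff β), coeff_monomial, coeff_zero]
    split_ifs <;> simp_all
  | add p q hp hq => simp only [map_add, Polynomial.coeff_add, hp, hq]

end homogeneousExpansion

theorem sum_sq_eq_sum_sq_homogeneousComponent [CommRing R] [LinearOrder R]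
    [IsStrictOrderedRing R] {ι : Type*} {s : Finset ι} {q : ι → MvPolynomial σ R} {d : ℕ}
    (h : (∑ i ∈ s, q i ^ 2).IsHomogeneous (d + d)) :
    ∑ i ∈ s, q i ^ 2 = ∑ i ∈ s, homogeneousComponent d (q i) ^ 2 := by
  have hexp : homogeneousExpansion (∑ i ∈ s, q i ^ 2) =
      ∑ i ∈ s, homogeneousExpansion (q i) ^ 2 := by
    simp only [map_sum, map_pow]
  have hdeg : (∑ i ∈ s, homogeneousExpansion (q i) ^ 2).natDegree ≤ d + d :=
    hexp ▸ Polynomial.natDegree_le_iff_coeff_eq_zero.mpr fun n hn => by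
      rw [coeff_homogeneousExpansion, homogeneousComponent_of_mem h, if_neg (ne_of_gt hn)]
  calc ∑ i ∈ s, q i ^ 2
      = (homogeneousExpansion (∑ i ∈ s, q i ^ 2)).coeff (d + d) := by
        rw [coeff_homogeneousExpansion, homogeneousComponent_eq_self h]
    _ = ∑ i ∈ s, homogeneousComponent d (q i) ^ 2 := by
        rw [hexp, Polynomial.coeff_sum_sq_of_natDegree_le
          (Polynomial.natDegree_le_of_natDegree_sum_sq_le hdeg)]
        simp only [coeff_homogeneousExpansion]

theorem IsHomogeneous.eval_eq_sum_antidiagonalTuple [CommSemiring R] {k n : ℕ}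
    {p : MvPolynomial (Fin k) R} (hp : p.IsHomogeneous n) (x : Fin k → R) :
    eval x p = ∑ a ∈ Finset.Nat.antidiagonalTuple k n,
      coeff (Finsupp.equivFunOnFinite.symm a) p * ∏ i, x i ^ a i := by
  have hmap : ∑ a ∈ Finset.Nat.antidiagonalTuple k n,
      coeff (Finsupp.equivFunOnFinite.symm a) p * ∏ i, x i ^ a i =
      ∑ α ∈ (Finset.Nat.antidiagonalTuple k n).map Finsupp.equivFunOnFinite.symm.toEmbedding,
        coeff α p * ∏ i, x i ^ α i := by
    simp [Finset.sum_map]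
  rw [eval_eq', hmap]
  refine Finset.sum_subset (fun α hα => ?_)
    (fun α _ hα => by rw [notMem_support_iff.mp hα, zero_mul])
  rw [Finset.mem_map_equiv, Finset.Nat.mem_antidiagonalTuple, Equiv.symm_symm]
  exact (Finsupp.degree_eq_sum α).symm.trans (hp.degree_eq_sum_deg_support hα).symm

end MvPolynomial

theorem eval_robinson (x : Fin 3 → ℝ) :
    eval x robinson =
      x 0 ^ 2 * (x 0 ^ 2 - x 1 ^ 2) * (x 0 ^ 2 - x 2 ^ 2) +
        x 1 ^ 2 * (x 1 ^ 2 - x 0 ^ 2) * (x 1 ^ 2 - x 2 ^ 2) +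
        x 2 ^ 2 * (x 2 ^ 2 - x 0 ^ 2) * (x 2 ^ 2 - x 1 ^ 2) := by
  simp only [robinson, map_add, map_sub, map_mul, map_pow, map_ofNat, eval_X]
  ring

theorem robinson_nonneg (x : Fin 3 → ℝ) : 0 ≤ eval x robinson :=
  eval_robinson x ▸ schur_inequality (sq_nonneg _) (sq_nonneg _) (sq_nonneg _)

theorem robinson_ne_zero : robinson ≠ 0 := fun h => by
  simpa [h, Matrix.cons_val_two] using eval_robinson ![1, 0, 0]

theorem isHomogeneous_robinson : robinson.IsHomogeneous 6 := by
  have h : ∀ i (k : ℕ), (X i ^ k : MvPolynomial (Fin 3) ℝ).IsHomogeneous k := isHomogeneous_X_pow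
  have h₂ : ∀ i j (a b : ℕ), a + b = 6 →
      (X i ^ a * X j ^ b : MvPolynomial (Fin 3) ℝ).IsHomogeneous 6 :=
    fun i j a b hab => hab ▸ (h i a).mul (h j b)
  have h₃ : (X 0 ^ 2 * X 1 ^ 2 * X 2 ^ 2 : MvPolynomial (Fin 3) ℝ).IsHomogeneous 6 :=
    ((h 0 2).mul (h 1 2)).mul (h 2 2)
  rw [robinson, ← map_ofNat C 3]
  exact ((((h 0 6).add (h 1 6)).add (h 2 6)).sub (((((((h₂ 0 1 4 2 rfl).add
    (h₂ 0 1 2 4 rfl)).add (h₂ 0 2 4 2 rfl)).add (h₂ 0 2 2 4 rfl)).add (h₂ 1 2 4 2 rfl)).add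
    (h₂ 1 2 2 4 rfl)))).add (h₃.C_mul 3)

theorem eq_zero_of_isHomogeneous_three_of_eval_robinson {p : MvPolynomial (Fin 3) ℝ}
    (hp : p.IsHomogeneous 3) (h : ∀ x, eval x robinson = 0 → eval x p = 0) : p = 0 := by
  have htuples : Finset.Nat.antidiagonalTuple 3 3 = {![3, 0, 0], ![0, 3, 0], ![0, 0, 3],
      ![2, 1, 0], ![1, 2, 0], ![2, 0, 1], ![1, 0, 2], ![0, 2, 1], ![0, 1, 2], ![1, 1, 1]} := by
    decide
  have heval : ∀ x, eval x robinson = 0 → ∑ a ∈ Finset.Nat.antidiagonalTuple 3 3,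
      coeff (Finsupp.equivFunOnFinite.symm a) p * ∏ i, x i ^ a i = 0 := fun x hx =>
    (hp.eval_eq_sum_antidiagonalTuple x).symm.trans (h x hx)
  simp only [htuples] at heval
  have e₁ := heval ![1, 1, 0] (by norm_num [robinson, Matrix.cons_val_two])
  have e₂ := heval ![1, -1, 0] (by norm_num [robinson, Matrix.cons_val_two])
  have e₃ := heval ![1, 0, 1] (by norm_num [robinson, Matrix.cons_val_two])
  have e₄ := heval ![1, 0, -1] (by norm_num [robinson, Matrix.cons_val_two])
  have e₅ := heval ![0, 1, 1] (by norm_num [robinson, Matrix.cons_val_two])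
  have e₆ := heval ![0, 1, -1] (by norm_num [robinson, Matrix.cons_val_two])
  have e₇ := heval ![1, 1, 1] (by norm_num [robinson, Matrix.cons_val_two])
  have e₈ := heval ![1, 1, -1] (by norm_num [robinson, Matrix.cons_val_two])
  have e₉ := heval ![1, -1, 1] (by norm_num [robinson, Matrix.cons_val_two])
  have e₁₀ := heval ![-1, 1, 1] (by norm_num [robinson, Matrix.cons_val_two])
  norm_num [Fin.prod_univ_three, Matrix.cons_val_two] at e₁ e₂ e₃ e₄ e₅ e₆ e₇ e₈ e₉ e₁₀
  have hcoeff : ∀ a ∈ Finset.Nat.antidiagonalTuple 3 3,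
      coeff (Finsupp.equivFunOnFinite.symm a) p = 0 := by
    simp only [htuples, Finset.mem_insert, Finset.mem_singleton]
    rintro a (rfl | rfl | rfl | rfl | rfl | rfl | rfl | rfl | rfl | rfl) <;> linarith
  refine MvPolynomial.funext fun x => ?_
  rw [hp.eval_eq_sum_antidiagonalTuple, map_zero,
    Finset.sum_eq_zero fun a ha => by rw [hcoeff a ha, zero_mul]]

/-- The Robinson polynomial is nonnegative on all of `ℝ³` but is not a sum of squares of
polynomials. -/
theorem robinson_nonneg_not_sos :
    (∀ x : Fin 3 → ℝ, 0 ≤ eval x robinson) ∧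
    ¬∃ (m : ℕ) (q : Fin m → MvPolynomial (Fin 3) ℝ), robinson = ∑ i, q i ^ 2 := by
  refine ⟨robinson_nonneg, ?_⟩
  rintro ⟨m, q, hq⟩
  have hcubic : robinson = ∑ i, homogeneousComponent 3 (q i) ^ 2 :=
    hq.trans (sum_sq_eq_sum_sq_homogeneousComponent (hq ▸ isHomogeneous_robinson))
  have hvanish : ∀ i, homogeneousComponent 3 (q i) = 0 := fun i =>
    eq_zero_of_isHomogeneous_three_of_eval_robinson (homogeneousComponent_isHomogeneous _ _)
      fun x hx => IsFormallyReal.eq_zero_of_sum_sq_eq_zero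
        (f := fun j => eval x (homogeneousComponent 3 (q j))) (by simpa [hcubic] using hx)
        i (Finset.mem_univ i)
  exact robinson_ne_zero (by simp [hcubic, hvanish])
end
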